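/- arXiv:2207.01928 — 5 statements merged into one kernel-verified Lean document; each statement's English description precedes it below -/
import Mathlib

section
/- For all real numbers $a, b > 0$, one has $(a-b)(\log a - \log b) \ge 4(\sqrt{a}-\sqrt{b})^2$. -/
/-!
With `s = √a`, `t = √b` the inequality reads `2 (s - t)² ≤ (s² - t²)(log s - log t)`.
Put `x = (s - t)/(s + t)`, so that `(1 + x)/(1 - x) = s/t`. The series
`log (1 + x) - log (1 - x) = ∑ 2 x^(2k+1)/(2k+1)`, multiplied by `x`, has only nonnegative
terms, and its first term is `2 x²`; clearing the denominator `(s + t)²` gives the claim.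
-/

open Real

theorem two_mul_sq_le_mul_log_sub_log {x : ℝ} (hx : |x| < 1) :
    2 * x ^ 2 ≤ x * (log (1 + x) - log (1 - x)) := by
  have hsum := (hasSum_log_sub_log_of_abs_lt_one hx).mul_left x
  have hterm (k : ℕ) : x * (2 * (1 / (2 * k + 1)) * x ^ (2 * k + 1))
      = 2 / (2 * k + 1) * (x ^ (k + 1)) ^ 2 := by
    ring
  calc 2 * x ^ 2
        = ∑ k ∈ ({0} : Finset ℕ), x * (2 * (1 / (2 * (k : ℝ) + 1)) * x ^ (2 * k + 1)) := by
        simp only [Finset.sum_singleton]; ring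
    _ ≤ x * (log (1 + x) - log (1 - x)) :=
        sum_le_hasSum {0} (fun k _ => by rw [hterm]; positivity) hsum

theorem two_mul_sub_sq_le_sq_sub_sq_mul_log_sub_log {s t : ℝ} (hs : 0 < s) (ht : 0 < t) :
    2 * (s - t) ^ 2 ≤ (s ^ 2 - t ^ 2) * (log s - log t) := by
  have hst : 0 < s + t := by positivity
  have hx : |(s - t) / (s + t)| < 1 := by
    rw [abs_div, abs_of_pos hst, div_lt_one hst, abs_lt]
    constructor <;> linarith
  have hplus : 1 + (s - t) / (s + t) = s / ((s + t) / 2) := by field_simp; ring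
  have hminus : 1 - (s - t) / (s + t) = t / ((s + t) / 2) := by field_simp; ring
  have key := two_mul_sq_le_mul_log_sub_log hx
  rw [hplus, hminus, log_div hs.ne' (by positivity), log_div ht.ne' (by positivity),
    sub_sub_sub_cancel_right] at key
  calc 2 * (s - t) ^ 2 = (s + t) ^ 2 * (2 * ((s - t) / (s + t)) ^ 2) := by field_simp
    _ ≤ (s + t) ^ 2 * ((s - t) / (s + t) * (log s - log t)) := by gcongr
    _ = (s ^ 2 - t ^ 2) * (log s - log t) := by field_simp; ring

/-- Elementary inequality: `(a-b)(log a - log b) ≥ 4(√a - √b)²` for positive reals. -/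
theorem log_diff_mul_ge_four_sq_sqrt_diff (a b : ℝ) (ha : 0 < a) (hb : 0 < b) :
    4 * (Real.sqrt a - Real.sqrt b) ^ 2 ≤ (a - b) * (Real.log a - Real.log b) := by
  have key := two_mul_sub_sq_le_sq_sub_sq_mul_log_sub_log (sqrt_pos.2 ha) (sqrt_pos.2 hb)
  rw [sq_sqrt ha.le, sq_sqrt hb.le, log_sqrt ha.le, log_sqrt hb.le] at key
  linarith
end

section
/- Let $N \ge 1$, $\mathcal{I} = \mathbb{Z}/N\mathbb{Z}$, $\Delta x > 0$, and let $(u_i)_{i\in\mathcal{I}}$ be non-negative reals with total mass $m = \sum_{i\in\mathcal{I}} \Delta x\, u_i$. Then $\sum_{i\in\mathcal{I}} |u_{i+1} - u_i| \le 2\sqrt{m}\, \left( \sum_{i\in\mathcal{I}} \Delta x\, \frac{(\sqrt{u_{i+1}} - \sqrt{u_i})^2}{\Delta x^2} \right)^{1/2}$, i.e. the discrete $W^{1,1}$ seminorm of $u$ is bounded by twice the square root of the mass times the discrete $H^1$ seminorm of $\sqrt{u}$. -/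
/-- The discrete `W^{1,1}` seminorm of a non-negative `u` on the discrete torus is bounded
by twice the square root of its mass times the discrete `H¹` seminorm of `√u`. -/
theorem discrete_W11_bound (N : ℕ) [NeZero N] (Δx : ℝ) (hΔx : 0 < Δx)
    (u : ZMod N → ℝ) (hu : ∀ i, 0 ≤ u i) :
    ∑ i : ZMod N, |u (i + 1) - u i|
      ≤ 2 * Real.sqrt (∑ i : ZMod N, Δx * u i) *
          Real.sqrt (∑ i : ZMod N, Δx * ((Real.sqrt (u (i + 1)) - Real.sqrt (u i)) ^ 2 / Δx ^ 2)) := by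
  set s : ZMod N → ℝ := fun i => Real.sqrt (u i) with hs
  have hM : (0:ℝ) ≤ ∑ i : ZMod N, u i := Finset.sum_nonneg fun i _ => hu i
  have hD : (0:ℝ) ≤ ∑ i : ZMod N, (s (i+1) - s i)^2 :=
    Finset.sum_nonneg fun i _ => sq_nonneg _
  set M := ∑ i : ZMod N, u i with hMdef
  set D := ∑ i : ZMod N, (s (i+1) - s i)^2 with hDdef
  -- rewrite each term
  have hterm : ∀ i : ZMod N, |u (i+1) - u i| = |s (i+1) - s i| * (s (i+1) + s i) := by
    intro i
    have h1 : u (i+1) = s (i+1) ^ 2 := (Real.sq_sqrt (hu _)).symm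
    have h2 : u i = s i ^ 2 := (Real.sq_sqrt (hu _)).symm
    rw [h1, h2]
    have : s (i+1) ^ 2 - s i ^ 2 = (s (i+1) - s i) * (s (i+1) + s i) := by ring
    rw [this, abs_mul, abs_of_nonneg (add_nonneg (Real.sqrt_nonneg _) (Real.sqrt_nonneg _))]
  -- Cauchy–Schwarz
  have hCS : (∑ i : ZMod N, |s (i+1) - s i| * (s (i+1) + s i))^2
      ≤ (∑ i : ZMod N, |s (i+1) - s i|^2) * (∑ i : ZMod N, (s (i+1) + s i)^2) :=
    Finset.sum_mul_sq_le_sq_mul_sq Finset.univ _ _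
  have habs : (∑ i : ZMod N, |s (i+1) - s i|^2) = D := by
    simp [hDdef, sq_abs]
  -- shift invariance
  have hshift : (∑ i : ZMod N, u (i+1)) = M := by
    rw [hMdef]
    exact Fintype.sum_equiv (Equiv.addRight (1 : ZMod N)) _ _ (fun i => rfl)
  have hsq : ∀ i : ZMod N, s i ^ 2 = u i := fun i => Real.sq_sqrt (hu i)
  have hsum4 : (∑ i : ZMod N, (s (i+1) + s i)^2) ≤ 4 * M := by
    have h1 : ∀ i : ZMod N, (s (i+1) + s i)^2 ≤ 2 * u (i+1) + 2 * u i := by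
      intro i
      nlinarith [hsq (i+1), hsq i, sq_nonneg (s (i+1) - s i)]
    calc (∑ i : ZMod N, (s (i+1) + s i)^2) ≤ ∑ i : ZMod N, (2 * u (i+1) + 2 * u i) :=
          Finset.sum_le_sum fun i _ => h1 i
      _ = 2 * (∑ i : ZMod N, u (i+1)) + 2 * M := by
          rw [Finset.sum_add_distrib, ← Finset.mul_sum, ← Finset.mul_sum]
      _ = 4 * M := by rw [hshift]; ring
  -- bound LHS
  have hLHS : (∑ i : ZMod N, |u (i+1) - u i|) ≤ 2 * Real.sqrt M * Real.sqrt D := by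
    have hnn : 0 ≤ ∑ i : ZMod N, |u (i+1) - u i| :=
      Finset.sum_nonneg fun i _ => abs_nonneg _
    have hrw : (∑ i : ZMod N, |u (i+1) - u i|)
        = ∑ i : ZMod N, |s (i+1) - s i| * (s (i+1) + s i) := by
      exact Finset.sum_congr rfl fun i _ => hterm i
    have hsq' : (∑ i : ZMod N, |u (i+1) - u i|)^2 ≤ D * (4 * M) := by
      rw [hrw]
      calc (∑ i : ZMod N, |s (i+1) - s i| * (s (i+1) + s i))^2
          ≤ (∑ i : ZMod N, |s (i+1) - s i|^2) * (∑ i : ZMod N, (s (i+1) + s i)^2) := hCS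
        _ ≤ D * (4 * M) := by
            rw [habs]
            exact mul_le_mul_of_nonneg_left hsum4 hD
    have h2 : (2 * Real.sqrt M * Real.sqrt D)^2 = D * (4 * M) := by
      rw [mul_pow, mul_pow, Real.sq_sqrt hM, Real.sq_sqrt hD]; ring
    have := Real.sqrt_le_sqrt hsq'
    nlinarith [Real.sqrt_nonneg M, Real.sqrt_nonneg D, hsq',
      mul_nonneg (mul_nonneg (by norm_num : (0:ℝ) ≤ 2) (Real.sqrt_nonneg M)) (Real.sqrt_nonneg D)]
  -- identify RHS
  have hRHS : 2 * Real.sqrt (∑ i : ZMod N, Δx * u i) *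
      Real.sqrt (∑ i : ZMod N, Δx * ((s (i+1) - s i) ^ 2 / Δx ^ 2))
      = 2 * Real.sqrt M * Real.sqrt D := by
    have e1 : (∑ i : ZMod N, Δx * u i) = Δx * M := by rw [hMdef, Finset.mul_sum]
    have e2 : (∑ i : ZMod N, Δx * ((s (i+1) - s i) ^ 2 / Δx ^ 2)) = D / Δx := by
      rw [hDdef, Finset.sum_div]
      refine Finset.sum_congr rfl fun i _ => ?_
      field_simp
    rw [e1, e2, mul_assoc, ← Real.sqrt_mul (mul_nonneg hΔx.le hM)]
    have : Δx * M * (D / Δx) = M * D := by field_simp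
    rw [this, Real.sqrt_mul hM, ← mul_assoc]
  rw [hRHS]
  exact hLHS
end

section
/- Let $N \ge 1$, $\mathcal{I} = \mathbb{Z}/N\mathbb{Z}$, let $(\sigma_j)_{j\in\mathcal{I}}$ be non-negative with $\sigma_j = \sigma_{-j}$, and let $(u_i)_{i\in\mathcal{I}}$ be positive reals. Then $\sum_{j\in\mathcal{I}} \sigma_j \sum_{i\in\mathcal{I}} (u_{i+1}u_{i+1-j} - u_i u_{i-j})(\log u_{i+1} - \log u_i) = \frac12 \sum_{j\in\mathcal{I}} \sigma_j \sum_{i\in\mathcal{I}} (u_{i+1}u_{i+1-j} - u_i u_{i-j})(\log(u_{i+1}u_{i+1-j}) - \log(u_i u_{i-j}))$, and consequently this quantity is bounded below by $2\sum_{j\in\mathcal{I}} \sigma_j \sum_{i\in\mathcal{I}} (\sqrt{u_{i+1}u_{i+1-j}} - \sqrt{u_i u_{i-j}})^2$. -/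
/-!
With $a = u_{i+1}u_{i+1-j}$ and $b = u_i u_{i-j}$, $\log a - \log b$ splits into
$(\log u_{i+1} - \log u_i) + (\log u_{i+1-j} - \log u_{i-j})$. The substitution
$j \mapsto -j$, $i \mapsto i - j$ (allowed because $\sigma$ is even) exchanges the two resulting
sums, so each of them is half of the whole.

The lower bound is termwise: with $x = \sqrt a$, $y = \sqrt b$ and $z = (x - y)/(x + y)$, the
inequality $(a - b)(\log a - \log b) \ge 4(\sqrt a - \sqrt b)^2$ becomes
$z \log\frac{1+z}{1-z} \ge 2z^2$, the first term of the series
$z \log\frac{1+z}{1-z} = \sum_k \frac{2}{2k+1} z^{2k+2}$ of non-negative terms.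
-/

open Finset Real

theorem Real.two_mul_sq_le_mul_log_one_add_sub_log_one_sub {z : ℝ} (hz : |z| < 1) :
    2 * z ^ 2 ≤ z * (log (1 + z) - log (1 - z)) := by
  have hsum := (hasSum_log_sub_log_of_abs_lt_one hz).mul_left z
  have hterm_nonneg (k : ℕ) : 0 ≤ z * (2 * (1 / (2 * k + 1)) * z ^ (2 * k + 1)) := by
    have : z * z ^ (2 * k + 1) = (z ^ (k + 1)) ^ 2 := by ring
    rw [mul_left_comm, this]
    positivity
  calc 2 * z ^ 2 = z * (2 * (1 / (2 * ((0 : ℕ) : ℝ) + 1)) * z ^ (2 * 0 + 1)) := by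
        norm_num; ring
    _ ≤ _ := le_hasSum hsum 0 fun k _ ↦ hterm_nonneg k

theorem Real.two_mul_sub_sq_le_sq_sub_sq_mul_log_sub_log {x y : ℝ} (hx : 0 < x) (hy : 0 < y) :
    2 * (x - y) ^ 2 ≤ (x ^ 2 - y ^ 2) * (log x - log y) := by
  obtain ⟨z, hz_def⟩ : ∃ z, z * (x + y) = x - y := ⟨(x - y) / (x + y), by field_simp⟩
  have hz : |z| < 1 := abs_lt.2 ⟨by nlinarith, by nlinarith⟩
  have hlog : log (1 + z) - log (1 - z) = log x - log y := by
    have h1 : 1 + z = 2 * x / (x + y) := by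
      rw [eq_div_iff (by positivity)]; linear_combination hz_def
    have h2 : 1 - z = 2 * y / (x + y) := by
      rw [eq_div_iff (by positivity)]; linear_combination -hz_def
    rw [h1, h2, log_div (by positivity) (by positivity), log_div (by positivity) (by positivity),
      log_mul two_ne_zero hx.ne', log_mul two_ne_zero hy.ne']
    ring
  have hquad := two_mul_sq_le_mul_log_one_add_sub_log_one_sub hz
  rw [hlog] at hquad
  calc 2 * (x - y) ^ 2 = (x + y) ^ 2 * (2 * z ^ 2) := by
        linear_combination (-2 * (x - y + z * (x + y))) * hz_def
    _ ≤ (x + y) ^ 2 * (z * (log x - log y)) := by gcongr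
    _ = (x ^ 2 - y ^ 2) * (log x - log y) := by
        linear_combination (x + y) * (log x - log y) * hz_def

theorem Real.four_mul_sqrt_sub_sqrt_sq_le_sub_mul_log_sub_log {a b : ℝ} (ha : 0 < a) (hb : 0 < b) :
    4 * (√a - √b) ^ 2 ≤ (a - b) * (log a - log b) := by
  have h := two_mul_sub_sq_le_sq_sub_sq_mul_log_sub_log (sqrt_pos.2 ha) (sqrt_pos.2 hb)
  rw [sq_sqrt ha.le, sq_sqrt hb.le, log_sqrt ha.le, log_sqrt hb.le] at h
  linarith

theorem Fintype.sum_mul_sum_sub_swap_of_even {G R : Type*} [AddCommGroup G] [Fintype G]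
    [NonUnitalNonAssocSemiring R] {σ : G → R} (hσ : Function.Even σ) (Φ : G → G → R) :
    ∑ j, σ j * ∑ i, Φ i (i - j) = ∑ j, σ j * ∑ i, Φ (i - j) i := by
  refine Fintype.sum_equiv (Equiv.neg G) _ _ fun j ↦ ?_
  rw [Equiv.neg_apply, hσ]
  congr 1
  exact Fintype.sum_equiv (Equiv.subRight j) _ _ fun i ↦ by simp

section ShiftedProducts

variable {G : Type*} [AddCommGroup G] [Fintype G]

theorem Fintype.sum_mul_sum_shift_prod_mul_sub_comm_of_even {R : Type*} [CommRing R]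
    {σ : G → R} (hσ : Function.Even σ) (s : G) (u g : G → R) :
    ∑ j, σ j * ∑ i, (u (i + s) * u (i + s - j) - u i * u (i - j)) * (g (i + s - j) - g (i - j))
      = ∑ j, σ j * ∑ i, (u (i + s) * u (i + s - j) - u i * u (i - j)) * (g (i + s) - g i) := by
  simp only [add_sub_right_comm _ s]
  convert Fintype.sum_mul_sum_sub_swap_of_even hσ
    (fun p q ↦ (u (p + s) * u (q + s) - u p * u q) * (g (q + s) - g q)) using 4 with j _ i _
  ring

theorem sum_mul_sum_sub_mul_log_sub_log_eq_half {σ : G → ℝ} (hσ : Function.Even σ)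
    {u : G → ℝ} (hu : ∀ i, 0 < u i) (s : G) :
    ∑ j, σ j * ∑ i, (u (i + s) * u (i + s - j) - u i * u (i - j)) * (log (u (i + s)) - log (u i))
      = 1 / 2 * ∑ j, σ j * ∑ i, (u (i + s) * u (i + s - j) - u i * u (i - j)) *
          (log (u (i + s) * u (i + s - j)) - log (u i * u (i - j))) := by
  have hlog_mul (i j : G) : log (u (i + s) * u (i + s - j)) - log (u i * u (i - j))
      = (log (u (i + s)) - log (u i)) + (log (u (i + s - j)) - log (u (i - j))) := by
    rw [log_mul (hu _).ne' (hu _).ne', log_mul (hu _).ne' (hu _).ne']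
    ring
  simp only [hlog_mul, mul_add, sum_add_distrib,
    Fintype.sum_mul_sum_shift_prod_mul_sub_comm_of_even hσ s u (fun i ↦ log (u i))]
  ring

theorem two_mul_sum_mul_sum_sqrt_sub_sqrt_sq_le {σ : G → ℝ} (hσ : ∀ j, 0 ≤ σ j)
    {u : G → ℝ} (hu : ∀ i, 0 < u i) (s : G) :
    2 * ∑ j, σ j * ∑ i, (√(u (i + s) * u (i + s - j)) - √(u i * u (i - j))) ^ 2
      ≤ 1 / 2 * ∑ j, σ j * ∑ i, (u (i + s) * u (i + s - j) - u i * u (i - j)) *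
          (log (u (i + s) * u (i + s - j)) - log (u i * u (i - j))) := by
  calc 2 * ∑ j, σ j * ∑ i, (√(u (i + s) * u (i + s - j)) - √(u i * u (i - j))) ^ 2
      = 1 / 2 * ∑ j, σ j * ∑ i, 4 * (√(u (i + s) * u (i + s - j)) - √(u i * u (i - j))) ^ 2 := by
        simp only [← mul_sum, mul_left_comm (σ _) 4]
        ring
    _ ≤ _ := by
        gcongr _ * ∑ j, _ * ∑ i, ?_ with j _ i _
        · exact hσ j
        · exact four_mul_sqrt_sub_sqrt_sq_le_sub_mul_log_sub_log
            (mul_pos (hu _) (hu _)) (mul_pos (hu _) (hu _))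

end ShiftedProducts

/-- Symmetrization identity and lower bound for the self-diffusion term in the discrete
entropy dissipation estimate. -/
theorem self_diffusion_symmetrization (N : ℕ) [NeZero N]
    (σ : ZMod N → ℝ) (hσ : ∀ j, 0 ≤ σ j) (hσsym : ∀ j, σ j = σ (-j))
    (u : ZMod N → ℝ) (hu : ∀ i, 0 < u i) :
    (∑ j : ZMod N, σ j * ∑ i : ZMod N,
        (u (i + 1) * u (i + 1 - j) - u i * u (i - j)) * (Real.log (u (i + 1)) - Real.log (u i))
      = (1 / 2) * ∑ j : ZMod N, σ j * ∑ i : ZMod N,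
          (u (i + 1) * u (i + 1 - j) - u i * u (i - j)) *
            (Real.log (u (i + 1) * u (i + 1 - j)) - Real.log (u i * u (i - j)))) ∧
    2 * ∑ j : ZMod N, σ j * ∑ i : ZMod N,
        (Real.sqrt (u (i + 1) * u (i + 1 - j)) - Real.sqrt (u i * u (i - j))) ^ 2
      ≤ ∑ j : ZMod N, σ j * ∑ i : ZMod N,
          (u (i + 1) * u (i + 1 - j) - u i * u (i - j)) *
            (Real.log (u (i + 1)) - Real.log (u i)) := by
  have hid := sum_mul_sum_sub_mul_log_sub_log_eq_half (fun j ↦ (hσsym j).symm) hu 1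
  exact ⟨hid, hid ▸ two_mul_sum_mul_sum_sqrt_sub_sqrt_sq_le hσ hu 1⟩
end

section
/- Let $N \ge 1$, $\mathcal{I} = \mathbb{Z}/N\mathbb{Z}$, $\Delta t, \Delta x > 0$, $(\mu_i^n)$ non-negative for $n = 1,\dots,K$, and suppose $\Delta t \cdot \max_{1\le n\le K} \max_i [(\Delta_{\mathcal{T}}\mu^n)_i]_+ < 1$ where $(\Delta_{\mathcal{T}}\mu)_i = (\mu_{i+1}-2\mu_i+\mu_{i-1})/\Delta x^2$ and $[x]_+ = \max(x,0)$. If $(z^n)_{0\le n \le K}$ solves $\frac{z_i^n - z_i^{n-1}}{\Delta t} = (\Delta_{\mathcal{T}}(\mu^n z^n))_i$ with $\tilde\gamma \le z_i^0 \le \tilde\Gamma$ for constants $0 \le \tilde\gamma \le \tilde\Gamma$, then for all $n$ and $i$: $\tilde\gamma \prod_{m=1}^n (1 + \Delta t \max_i |[(\Delta_{\mathcal{T}}\mu^m)_i]_-|)^{-1} \le z_i^n \le \tilde\Gamma \prod_{m=1}^n (1 - \Delta t \max_i [(\Delta_{\mathcal{T}}\mu^m)_i]_+)^{-1}$. -/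
/-!
At a point `j` where `z^n` is maximal, `μ ≥ 0` gives `Δ(μ z^n)_j ≤ (Δμ)_j z^n_j`, so the scheme
yields `z^n_j (1 - Δt (Δμ^n)_j) ≤ z^{n-1}_j`. The CFL condition keeps the factor positive, hence
each time step multiplies the upper bound by at most `(1 - Δt max [Δμ^n]_+)⁻¹`. Symmetrically, at
a minimum point the lower bound is multiplied by at least `(1 + Δt max |[Δμ^n]_-|)⁻¹`; here the
CFL condition is what forces the new minimum to stay nonnegative. Induction on `n` concludes.
-/

section DiscreteLaplacian

variable {G : Type*} [Add G] [Sub G] [One G]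

noncomputable def discreteLaplacian (Δx : ℝ) (u : G → ℝ) (i : G) : ℝ :=
  (u (i + 1) - 2 * u i + u (i - 1)) / Δx ^ 2

variable {Δx : ℝ} {μ u : G → ℝ} {j : G}

theorem discreteLaplacian_mul_le_of_forall_le (hμ : ∀ i, 0 ≤ μ i) (hj : ∀ i, u i ≤ u j) :
    discreteLaplacian Δx (μ * u) j ≤ discreteLaplacian Δx μ j * u j := by
  rw [discreteLaplacian, discreteLaplacian, div_mul_eq_mul_div]
  gcongr
  simp only [Pi.mul_apply]
  linarith [mul_le_mul_of_nonneg_left (hj (j + 1)) (hμ (j + 1)),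
    mul_le_mul_of_nonneg_left (hj (j - 1)) (hμ (j - 1))]

theorem le_discreteLaplacian_mul_of_forall_ge (hμ : ∀ i, 0 ≤ μ i) (hj : ∀ i, u j ≤ u i) :
    discreteLaplacian Δx μ j * u j ≤ discreteLaplacian Δx (μ * u) j := by
  rw [discreteLaplacian, discreteLaplacian, div_mul_eq_mul_div]
  gcongr
  simp only [Pi.mul_apply]
  linarith [mul_le_mul_of_nonneg_left (hj (j + 1)) (hμ (j + 1)),
    mul_le_mul_of_nonneg_left (hj (j - 1)) (hμ (j - 1))]

end DiscreteLaplacian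

section SupPosPart

variable {G : Type*} [Fintype G] [Nonempty G]

noncomputable def supPosPart (f : G → ℝ) : ℝ :=
  Finset.univ.sup' Finset.univ_nonempty fun j => max (f j) 0

variable (f : G → ℝ)

theorem le_supPosPart (j : G) : f j ≤ supPosPart f :=
  Finset.le_sup'_of_le _ (Finset.mem_univ j) (le_max_left _ _)

theorem supPosPart_nonneg : 0 ≤ supPosPart f :=
  Finset.le_sup'_of_le _ (Finset.mem_univ (Classical.arbitrary G)) (le_max_right _ _)

theorem mul_supPosPart_lt {a b : ℝ} (h : ∀ j, a * max (f j) 0 < b) : a * supPosPart f < b := by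
  obtain ⟨j, -, hj⟩ := Finset.exists_mem_eq_sup' Finset.univ_nonempty fun j => max (f j) 0
  rw [supPosPart, hj]
  exact h j

end SupPosPart

section ImplicitStep

variable {G : Type*} [Finite G] [Add G] [Sub G] [One G]

/-- `u` is obtained from `v` by one implicit Euler step of `∂ₜ z = Δ(μ z)`. -/
def IsImplicitStep (Δt Δx : ℝ) (μ v u : G → ℝ) : Prop :=
  ∀ i, u i - v i = Δt * discreteLaplacian Δx (μ * u) i

variable {Δt Δx S : ℝ} {μ v u : G → ℝ}

theorem IsImplicitStep.le_mul_inv_sub (hstep : IsImplicitStep Δt Δx μ v u) (hΔt : 0 ≤ Δt)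
    (hμ : ∀ i, 0 ≤ μ i) (hS : ∀ j, discreteLaplacian Δx μ j ≤ S) (hcfl : Δt * S < 1)
    {C : ℝ} (hC : 0 ≤ C) (hv : ∀ i, v i ≤ C) (i : G) : u i ≤ C * (1 - Δt * S)⁻¹ := by
  have : Nonempty G := ⟨i⟩
  obtain ⟨j, hj⟩ := Finite.exists_max u
  have hlap :=
    mul_le_mul_of_nonneg_left (discreteLaplacian_mul_le_of_forall_le (Δx := Δx) hμ hj) hΔt
  have hDS := mul_le_mul_of_nonneg_left (hS j) hΔt
  have hfac : 0 < 1 - Δt * S := by linarith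
  have hmax : u j * (1 - Δt * S) ≤ C := by
    rcases le_or_gt 0 (u j) with hu | hu
    · linarith [hstep j, hv j, mul_le_mul_of_nonneg_left hDS hu]
    · linarith [mul_neg_of_neg_of_pos hu hfac]
  rw [← div_eq_mul_inv, le_div_iff₀ hfac]
  exact (mul_le_mul_of_nonneg_right (hj i) hfac.le).trans hmax

theorem IsImplicitStep.mul_inv_add_le (hstep : IsImplicitStep Δt Δx μ v u) (hΔt : 0 ≤ Δt)
    (hμ : ∀ i, 0 ≤ μ i) (hS : ∀ j, -discreteLaplacian Δx μ j ≤ S)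
    (hcfl : ∀ j, Δt * discreteLaplacian Δx μ j < 1) {c : ℝ} (hc : 0 ≤ c)
    (hv : ∀ i, c ≤ v i) (i : G) : c * (1 + Δt * S)⁻¹ ≤ u i := by
  have : Nonempty G := ⟨i⟩
  obtain ⟨j, hj⟩ := Finite.exists_min u
  have hlap :=
    mul_le_mul_of_nonneg_left (le_discreteLaplacian_mul_of_forall_ge (Δx := Δx) hμ hj) hΔt
  have hDS := mul_le_mul_of_nonneg_left (hS j) hΔt
  have hfac : 0 < 1 - Δt * discreteLaplacian Δx μ j := by linarith [hcfl j]
  have hmin : c ≤ u j * (1 - Δt * discreteLaplacian Δx μ j) := by linarith [hstep j, hv j]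
  have hu : 0 ≤ u j := nonneg_of_mul_nonneg_left (hc.trans hmin) hfac
  rw [← div_eq_mul_inv, div_le_iff₀ (by linarith)]
  calc c ≤ u j * (1 - Δt * discreteLaplacian Δx μ j) := hmin
    _ ≤ u j * (1 + Δt * S) := by gcongr; linarith
    _ ≤ u i * (1 + Δt * S) := mul_le_mul_of_nonneg_right (hj i) (by linarith)

end ImplicitStep

theorem kolmogorov_Linfty_bounds_general (N : ℕ) [NeZero N] (Δt Δx : ℝ) (hΔt : 0 < Δt)
    (K : ℕ) (μ z : ℕ → ZMod N → ℝ) (hμ : ∀ n i, 0 ≤ μ n i)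
    (tγ tΓ : ℝ) (htγ : 0 ≤ tγ)
    (hz0 : ∀ i, tγ ≤ z 0 i ∧ z 0 i ≤ tΓ)
    (hscheme : ∀ n ∈ Finset.Icc 1 K, ∀ i : ZMod N,
      (z n i - z (n - 1) i) / Δt
        = (μ n (i + 1) * z n (i + 1) - 2 * (μ n i * z n i) + μ n (i - 1) * z n (i - 1)) / Δx ^ 2)
    (hcfl : ∀ n ∈ Finset.Icc 1 K, ∀ i : ZMod N,
      Δt * max ((μ n (i + 1) - 2 * μ n i + μ n (i - 1)) / Δx ^ 2) 0 < 1) :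
    ∀ n ≤ K, ∀ i : ZMod N,
      tγ * ∏ m ∈ Finset.Icc 1 n,
          (1 + Δt * Finset.univ.sup' Finset.univ_nonempty
            (fun j : ZMod N => max (-((μ m (j + 1) - 2 * μ m j + μ m (j - 1)) / Δx ^ 2)) 0))⁻¹
        ≤ z n i ∧
      z n i ≤ tΓ * ∏ m ∈ Finset.Icc 1 n,
          (1 - Δt * Finset.univ.sup' Finset.univ_nonempty
            (fun j : ZMod N => max ((μ m (j + 1) - 2 * μ m j + μ m (j - 1)) / Δx ^ 2) 0))⁻¹ := by
  have hstep : ∀ n ∈ Finset.Icc 1 K, IsImplicitStep Δt Δx (μ n) (z (n - 1)) (z n) :=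
    fun n hn i => by rw [mul_comm]; exact (div_eq_iff hΔt.ne').1 (hscheme n hn i)
  intro n hn
  induction n with
  | zero => simpa using hz0
  | succ n ih =>
    have hmem : n + 1 ∈ Finset.Icc 1 K := Finset.mem_Icc.2 ⟨by omega, hn⟩
    have hlow : 0 ≤ tγ * ∏ m ∈ Finset.Icc 1 n,
        (1 + Δt * supPosPart (-discreteLaplacian Δx (μ m)))⁻¹ :=
      mul_nonneg htγ <| Finset.prod_nonneg fun m _ => inv_nonneg.2 <| by
        linarith [mul_nonneg hΔt.le (supPosPart_nonneg (-discreteLaplacian Δx (μ m)))]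
    have hz := ih (by omega)
    intro i
    rw [Finset.prod_Icc_succ_top (by omega), Finset.prod_Icc_succ_top (by omega),
      ← mul_assoc, ← mul_assoc]
    exact ⟨(hstep _ hmem).mul_inv_add_le hΔt.le (hμ _) (le_supPosPart _)
        (fun j => (mul_le_mul_of_nonneg_left (le_max_left _ _) hΔt.le).trans_lt (hcfl _ hmem j))
        hlow (fun j => (hz j).1) i,
      (hstep _ hmem).le_mul_inv_sub hΔt.le (hμ _) (le_supPosPart _)
        (mul_supPosPart_lt _ (hcfl _ hmem)) ((hlow.trans (hz 0).1).trans (hz 0).2)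
        (fun j => (hz j).2) i⟩

/-- Discrete `L^∞` bounds (maximum principle with growth) for the implicit finite volume
discretization of the Kolmogorov equation `∂ₜ z = Δ(μ z)` on the discrete torus. -/
theorem kolmogorov_Linfty_bounds (N : ℕ) [NeZero N] (Δt Δx : ℝ) (hΔt : 0 < Δt) (hΔx : 0 < Δx)
    (K : ℕ) (μ z : ℕ → ZMod N → ℝ) (hμ : ∀ n i, 0 ≤ μ n i)
    (tγ tΓ : ℝ) (htγ : 0 ≤ tγ) (htγΓ : tγ ≤ tΓ)
    (hz0 : ∀ i, tγ ≤ z 0 i ∧ z 0 i ≤ tΓ)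
    (hscheme : ∀ n ∈ Finset.Icc 1 K, ∀ i : ZMod N,
      (z n i - z (n - 1) i) / Δt
        = (μ n (i + 1) * z n (i + 1) - 2 * (μ n i * z n i) + μ n (i - 1) * z n (i - 1)) / Δx ^ 2)
    (hcfl : ∀ n ∈ Finset.Icc 1 K, ∀ i : ZMod N,
      Δt * max ((μ n (i + 1) - 2 * μ n i + μ n (i - 1)) / Δx ^ 2) 0 < 1) :
    ∀ n ≤ K, ∀ i : ZMod N,
      tγ * ∏ m ∈ Finset.Icc 1 n,
          (1 + Δt * Finset.univ.sup' Finset.univ_nonempty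
            (fun j : ZMod N => max (-((μ m (j + 1) - 2 * μ m j + μ m (j - 1)) / Δx ^ 2)) 0))⁻¹
        ≤ z n i ∧
      z n i ≤ tΓ * ∏ m ∈ Finset.Icc 1 n,
          (1 - Δt * Finset.univ.sup' Finset.univ_nonempty
            (fun j : ZMod N => max ((μ m (j + 1) - 2 * μ m j + μ m (j - 1)) / Δx ^ 2) 0))⁻¹ :=
  kolmogorov_Linfty_bounds_general N Δt Δx hΔt K μ z hμ tγ tΓ htγ hz0 hscheme hcfl
end

section
/- Let $N \ge 1$, $\mathcal{I} = \mathbb{Z}/N\mathbb{Z}$, and $(z_i^k), (z_i^{k-1}), (\mu_i^k)$ reals with $\mu_i^k \ge 0$, satisfying the discrete Kolmogorov scheme $\frac{z_i^k - z_i^{k-1}}{\Delta t} = (\Delta_{\mathcal{T}}(\mu^k z^k))_i$ for all $i$. Then the following one-step energy inequality holds: $\frac12\sum_i \Delta x\,|z_i^k|^2 + \Delta t \sum_i \frac{\mu_i^k + \mu_{i+1}^k}{2}\cdot\frac{(z_{i+1}^k - z_i^k)^2}{\Delta x} \le \frac12\sum_i \Delta x\,|z_i^{k-1}|^2 + \frac{\Delta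 t}{2}\max_i [(\Delta_{\mathcal{T}}\mu^k)_i]_+ \sum_i \Delta x\,|z_i^k|^2$. -/
/-!
Multiplying the scheme by `z i` and summing, the left side dominates half the increment of
`∑ z i ^ 2` because `(a - b) a ≥ (a² - b²) / 2`. On the right, two summations by parts on the
torus turn `∑ (Δ(μ z))_i z_i` into minus the dissipation `∑ (μ_i + μ_{i+1}) / 2 · (z_{i+1} - z_i)²`
plus `½ ∑ z_i² (Δμ)_i`, and the latter is at most `½ max_i [(Δμ)_i]_+ ∑ z_i²`.
-/

open Finset

section secondDiff

variable {G : Type*} [AddGroup G] [Fintype G] (a : G)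

/-- `Δx²` times the discrete Laplacian with step `a`. -/
def secondDiff (w : G → ℝ) (i : G) : ℝ := w (i + a) - 2 * w i + w (i - a)

theorem sum_secondDiff_mul (w z : G → ℝ) :
    ∑ i, secondDiff a w i * z i = -∑ i, (w (i + a) - w i) * (z (i + a) - z i) := by
  have shift : ∑ i, (w i - w (i - a)) * z i = ∑ i, (w (i + a) - w i) * z (i + a) := by
    simpa using (Equiv.sum_comp (Equiv.addRight a) fun i => (w i - w (i - a)) * z i).symm
  calc ∑ i, secondDiff a w i * z i
      = ∑ i, (w (i + a) - w i) * z i - ∑ i, (w i - w (i - a)) * z i := by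
        rw [← sum_sub_distrib]
        exact sum_congr rfl fun i _ => by unfold secondDiff; ring
    _ = _ := by
        rw [shift, ← sum_sub_distrib, ← sum_neg_distrib]
        exact sum_congr rfl fun i _ => by ring

theorem sum_secondDiff_mul_mul_self (μ z : G → ℝ) :
    ∑ i, secondDiff a (μ * z) i * z i
      = (1 / 2) * ∑ i, secondDiff a μ i * z i ^ 2
        - ∑ i, (μ i + μ (i + a)) / 2 * (z (i + a) - z i) ^ 2 := by
  simp only [sum_secondDiff_mul, mul_neg, mul_sum, ← sum_neg_distrib, ← sum_sub_distrib]
  exact sum_congr rfl fun i _ => by simp only [Pi.mul_apply]; ring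

end secondDiff

theorem half_sub_sum_sq_le_sum_sub_mul {G : Type*} [Fintype G] (z y : G → ℝ) :
    (∑ i, z i ^ 2 - ∑ i, y i ^ 2) / 2 ≤ ∑ i, (z i - y i) * z i := by
  rw [← sum_sub_distrib, sum_div]
  exact sum_le_sum fun i _ => by nlinarith [sq_nonneg (z i - y i)]

theorem sum_mul_sq_le_of_le {G : Type*} [Fintype G] {s : G → ℝ} {M : ℝ} (hs : ∀ i, s i ≤ M)
    (z : G → ℝ) :
    ∑ i, s i * z i ^ 2 ≤ M * ∑ i, z i ^ 2 := by
  rw [mul_sum]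
  exact sum_le_sum fun i _ => mul_le_mul_of_nonneg_right (hs i) (sq_nonneg _)

theorem kolmogorov_energy_estimate_general (N : ℕ) [NeZero N] (Δt Δx : ℝ) (hΔt : 0 < Δt) (hΔx : 0 < Δx)
    (μ z zprev : ZMod N → ℝ)
    (hscheme : ∀ i : ZMod N,
      (z i - zprev i) / Δt
        = (μ (i + 1) * z (i + 1) - 2 * (μ i * z i) + μ (i - 1) * z (i - 1)) / Δx ^ 2) :
    (1 / 2) * ∑ i : ZMod N, Δx * |z i| ^ 2
        + Δt * ∑ i : ZMod N, (μ i + μ (i + 1)) / 2 * ((z (i + 1) - z i) ^ 2 / Δx)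
      ≤ (1 / 2) * ∑ i : ZMod N, Δx * |zprev i| ^ 2
        + Δt / 2 * Finset.univ.sup' Finset.univ_nonempty
            (fun j : ZMod N => max ((μ (j + 1) - 2 * μ j + μ (j - 1)) / Δx ^ 2) 0)
          * ∑ i : ZMod N, Δx * |z i| ^ 2 := by
  set M := Finset.univ.sup' Finset.univ_nonempty
    (fun j : ZMod N => max ((μ (j + 1) - 2 * μ j + μ (j - 1)) / Δx ^ 2) 0)
  have hM : ∀ i, secondDiff 1 μ i / Δx ^ 2 ≤ M := fun i =>
    le_sup'_of_le _ (mem_univ i) (le_max_left _ _)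
  have hstep : ∀ i, (z i - zprev i) * z i * Δx ^ 2 = Δt * (secondDiff 1 (μ * z) i * z i) := by
    intro i
    have := hscheme i
    field_simp at this
    rw [secondDiff, Pi.mul_apply, Pi.mul_apply, Pi.mul_apply]
    linear_combination z i * this
  have hsum : Δx ^ 2 * ∑ i, (z i - zprev i) * z i
      = Δt * ((1 / 2) * ∑ i, secondDiff 1 μ i * z i ^ 2
        - ∑ i, (μ i + μ (i + 1)) / 2 * (z (i + 1) - z i) ^ 2) := by
    rw [mul_comm, sum_mul, sum_congr rfl fun i _ => hstep i, ← mul_sum,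
      sum_secondDiff_mul_mul_self]
  have hcurv := sum_mul_sq_le_of_le (fun i => (div_le_iff₀' (by positivity)).mp (hM i)) z
  have henergy := half_sub_sum_sq_le_sum_sub_mul z zprev
  simp only [sq_abs, ← mul_sum, ← mul_div_assoc, ← sum_div]
  set P := ∑ i, z i ^ 2
  set D := ∑ i, (μ i + μ (i + 1)) / 2 * (z (i + 1) - z i) ^ 2
  have hscaled : Δx ^ 2 * ((P - ∑ i, zprev i ^ 2) / 2) + Δt * D ≤ Δt * (Δx ^ 2 * M * P) / 2 := by
    linarith [mul_le_mul_of_nonneg_left henergy (sq_nonneg Δx),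
      mul_le_mul_of_nonneg_left hcurv hΔt.le]
  refine sub_nonneg.mp ((div_nonneg (sub_nonneg.mpr hscaled) hΔx.le).trans_eq ?_)
  field_simp
  ring

/-- One-step `L²` energy estimate for the implicit discretization of the Kolmogorov
equation `∂ₜ z = Δ(μ z)` on the discrete torus. -/
theorem kolmogorov_energy_estimate (N : ℕ) [NeZero N] (Δt Δx : ℝ) (hΔt : 0 < Δt) (hΔx : 0 < Δx)
    (μ z zprev : ZMod N → ℝ) (hμ : ∀ i, 0 ≤ μ i)
    (hscheme : ∀ i : ZMod N,
      (z i - zprev i) / Δt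
        = (μ (i + 1) * z (i + 1) - 2 * (μ i * z i) + μ (i - 1) * z (i - 1)) / Δx ^ 2) :
    (1 / 2) * ∑ i : ZMod N, Δx * |z i| ^ 2
        + Δt * ∑ i : ZMod N, (μ i + μ (i + 1)) / 2 * ((z (i + 1) - z i) ^ 2 / Δx)
      ≤ (1 / 2) * ∑ i : ZMod N, Δx * |zprev i| ^ 2
        + Δt / 2 * Finset.univ.sup' Finset.univ_nonempty
            (fun j : ZMod N => max ((μ (j + 1) - 2 * μ j + μ (j - 1)) / Δx ^ 2) 0)
          * ∑ i : ZMod N, Δx * |z i| ^ 2 :=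
  kolmogorov_energy_estimate_general N Δt Δx hΔt hΔx μ z zprev hscheme
end
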